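/- arXiv:2604.09340 — 4 statements merged into one kernel-verified Lean document; each statement's English description precedes it below -/
import Mathlib

section
/- Fix k ∈ [0,1/2]. Then for every φ ∈ Φ one has J_k(φ) ≤ (1−k)·π(1), and equality holds if and only if φ(u) = 1 for every u ∈ [0,1]. In other words, the constant-one profile (corresponding to the degenerate market composition at the top type) is the unique maximizer of J_k on Φ when the weight on consumer surplus is at most one half. -/
/-!
Fix `u ∈ (0,1)` and write `z = φ u`, `Q = Q_φ u ≤ 1`. Because `q z` is a feasible quantity for the
type `Q`, the surplus term satisfies `(Q - z) q(z) + π(z) = Q q(z) - c(q z) ≤ π(Q) ≤ π(1)`, so the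
integrand of `J_k` is `k ((Q - z) q(z) + π(z)) + (1 - 2k) π(z) ≤ k π(1) + (1 - 2k) π(1)`.
If `J_k(φ) = (1 - k) π(1)`, equality holds for almost every `u`, which forces `π(z) = π(1)` when
`k < 1/2` and `π(Q) = π(1)` when `k = 1/2`. But `π(x) = π(1)` with `x < 1` would force `q x = 0`,
hence `π(x) = 0 < π(1)`. So `φ u = 1` or `Q_φ u = 1` for almost every `u`, and monotonicity of `φ`
spreads this to `φ = 1` on all of `[0,1]`.
-/

open MeasureTheory Set Filter

namespace Screening

/-- Assumption 1 on the cost function. -/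
structure Assumption1 (c : ℝ → ℝ) (Qbar qbar : ℝ) : Prop where
  contDiff2 : ContDiffOn ℝ 2 c (Set.Ioi 0)
  strictMono : StrictMonoOn c (Set.Ici 0)
  strictConvex : StrictConvexOn ℝ (Set.Ici 0) c
  zero_val : c 0 = 0
  deriv_zero : derivWithin c (Set.Ici 0) 0 = 0
  Qbar_pos : 0 < Qbar
  second_deriv_pos : ∀ x ∈ Set.Ioc (0:ℝ) Qbar, 0 < deriv (deriv c) x
  qbar_pos : 0 < qbar
  qbar_lt_Qbar : qbar < Qbar
  deriv_qbar : deriv c qbar = 1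

/-- Assumption 2 (curvature condition). -/
structure Assumption2 (c : ℝ → ℝ) (qbar : ℝ) : Prop where
  contDiff3 : ContDiffOn ℝ 3 c (Set.Ioi 0)
  curvature : ∀ x ∈ Set.Ioc (0:ℝ) qbar,
    -x * deriv (deriv (deriv c)) x / deriv (deriv c) x < 2

/-- `q` is the (unique) pointwise maximizer of `x ↦ z·x − c x` over `[0, qbar]`. -/
def IsArgmaxSelection (c : ℝ → ℝ) (qbar : ℝ) (q : ℝ → ℝ) : Prop :=
  ∀ z : ℝ, q z ∈ Set.Icc (0:ℝ) qbar ∧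
    ∀ x ∈ Set.Icc (0:ℝ) qbar, z * x - c x ≤ z * q z - c (q z)

/-- Indirect profit `π(z) = z·q(z) − c(q(z))`. -/
noncomputable def piFun (c q : ℝ → ℝ) (z : ℝ) : ℝ := z * q z - c (q z)

/-- Membership in Φ: nondecreasing, `[0,1]`-valued, right-continuous on `[0,1)`. -/
def MemPhi (φ : ℝ → ℝ) : Prop :=
  (∀ u ∈ Set.Icc (0:ℝ) 1, φ u ∈ Set.Icc (0:ℝ) 1) ∧
  MonotoneOn φ (Set.Icc (0:ℝ) 1) ∧
  ∀ u ∈ Set.Ico (0:ℝ) 1, ContinuousWithinAt φ (Set.Ici u) u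

/-- The induced quantile `Q_φ`. -/
noncomputable def Qfun (φ : ℝ → ℝ) (u : ℝ) : ℝ :=
  if u < 1 then (∫ t in u..1, φ t) / (1 - u)
  else limUnder (nhdsWithin 1 (Set.Iio 1))
    (fun v => (∫ t in v..1, φ t) / (1 - v))

/-- Seller profit `Π(φ)`. -/
noncomputable def Profit (c q φ : ℝ → ℝ) : ℝ := ∫ u in (0:ℝ)..1, piFun c q (φ u)

/-- Consumer surplus `CS(φ)`. -/
noncomputable def CS (q φ : ℝ → ℝ) : ℝ :=
  ∫ u in (0:ℝ)..1, (Qfun φ u - φ u) * q (φ u)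

/-- Weighted objective `J_k(φ)`. -/
noncomputable def Jfun (c q : ℝ → ℝ) (k : ℝ) (φ : ℝ → ℝ) : ℝ :=
  k * CS q φ + (1 - k) * Profit c q φ

/-- Cumulative spillover `A_φ(u)`. -/
noncomputable def Afun (q φ : ℝ → ℝ) (u : ℝ) : ℝ :=
  ∫ s in (0:ℝ)..u, q (φ s) / (1 - s)

/-- `q'(z) = 1 / c''(q(z))`. -/
noncomputable def qprime (c q : ℝ → ℝ) (z : ℝ) : ℝ := (deriv (deriv c) (q z))⁻¹

/-- First-variation density `H_k[φ](u)`. -/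
noncomputable def Hfun (c q : ℝ → ℝ) (k : ℝ) (φ : ℝ → ℝ) (u : ℝ) : ℝ :=
  k * Afun q φ u + k * (Qfun φ u - φ u) * qprime c q (φ u) + (1 - 2*k) * q (φ u)

end Screening

theorem MonotoneOn.eq_of_le_of_integral_eq {f : ℝ → ℝ} {a b u M : ℝ}
    (hf : MonotoneOn f (Icc a b)) (hM : ∀ x ∈ Icc a b, f x ≤ M)
    (hint : ∫ x in a..b, f x = (b - a) * M) (hu : u ∈ Ioc a b) : f u = M := by
  have hau : a ≤ u := hu.1.le
  have hfi : ∀ {s t}, a ≤ s → s ≤ t → t ≤ b → IntervalIntegrable f volume s t :=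
    fun has hst htb => MonotoneOn.intervalIntegrable
      (hf.mono (by rw [uIcc_of_le hst]; exact Icc_subset_Icc has htb))
  have hleft : ∫ x in a..u, f x ≤ (u - a) * f u := by
    simpa [mul_comm] using intervalIntegral.integral_mono_on hau (hfi le_rfl hau hu.2)
      intervalIntegrable_const fun x hx => hf ⟨hx.1, hx.2.trans hu.2⟩ ⟨hau, hu.2⟩ hx.2
  have hright : ∫ x in u..b, f x ≤ (b - u) * M := by
    simpa [mul_comm] using intervalIntegral.integral_mono_on hu.2 (hfi hau hu.2 le_rfl)
      intervalIntegrable_const fun x hx => hM x ⟨hau.trans hx.1, hx.2⟩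
  have hsplit := intervalIntegral.integral_add_adjacent_intervals
    (hfi le_rfl hau hu.2) (hfi hau hu.2 le_rfl)
  refine le_antisymm (hM u ⟨hau, hu.2⟩) (le_of_mul_le_mul_left ?_ (sub_pos.2 hu.1))
  linarith

theorem ae_restrict_Ioo_eq_of_le_of_integral_eq {f : ℝ → ℝ} {a b C : ℝ} (hab : a ≤ b)
    (hf : IntervalIntegrable f volume a b) (hle : ∀ x ∈ Ioo a b, f x ≤ C)
    (hint : ∫ x in a..b, f x = (b - a) * C) : ∀ᵐ x ∂volume.restrict (Ioo a b), f x = C := by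
  have hgap : ∫ x in a..b, (C - f x) = 0 := by
    rw [intervalIntegral.integral_sub intervalIntegrable_const hf, hint]
    simp [mul_comm]
  have hnonneg : 0 ≤ᵐ[volume.restrict (Ioc a b)] fun x => C - f x := by
    rw [← Measure.restrict_congr_set Ioo_ae_eq_Ioc]
    filter_upwards [ae_restrict_mem measurableSet_Ioo] with x hx
    exact sub_nonneg.2 (hle x hx)
  have hzero := (intervalIntegral.integral_eq_zero_iff_of_le_of_nonneg_ae hab hnonneg
    (intervalIntegrable_const.sub hf)).1 hgap
  rw [← Measure.restrict_congr_set Ioo_ae_eq_Ioc] at hzero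
  filter_upwards [hzero] with x hx
  exact (sub_eq_zero.1 hx).symm

namespace Screening

namespace IsArgmaxSelection

variable {c q : ℝ → ℝ} {Qbar qbar : ℝ}

theorem mul_sub_le_piFun (hq : IsArgmaxSelection c qbar q) (z z' : ℝ) :
    z' * q z - c (q z) ≤ piFun c q z' :=
  (hq z').2 _ (hq z).1

theorem nonneg (hq : IsArgmaxSelection c qbar q) (z : ℝ) : 0 ≤ q z := (hq z).1.1

theorem monotone (hq : IsArgmaxSelection c qbar q) : Monotone q := by
  intro a b hab
  by_contra! h
  have hab' : a < b := hab.lt_of_ne (by rintro rfl; exact h.false)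
  have h1 := (hq a).2 (q b) (hq b).1
  have h2 := (hq b).2 (q a) (hq a).1
  nlinarith [mul_pos (sub_pos.2 hab') (sub_pos.2 h)]

theorem monotone_piFun (hq : IsArgmaxSelection c qbar q) : Monotone (piFun c q) := by
  intro a b hab
  calc piFun c q a ≤ b * q a - c (q a) := by
        unfold piFun; nlinarith [hq.nonneg a]
    _ ≤ piFun c q b := hq.mul_sub_le_piFun a b

theorem surplus_add_piFun_le (hq : IsArgmaxSelection c qbar q) (z Q : ℝ) :
    (Q - z) * q z + piFun c q z ≤ piFun c q Q := by
  have h := hq.mul_sub_le_piFun z Q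
  unfold piFun at h ⊢
  linarith

theorem weighted_surplus_le (hq : IsArgmaxSelection c qbar q) {k z Q : ℝ}
    (hk : k ∈ Icc (0 : ℝ) (1 / 2)) (hz : z ≤ 1) (hQ : Q ≤ 1) :
    k * ((Q - z) * q z) + (1 - k) * piFun c q z ≤ (1 - k) * piFun c q 1 := by
  have hsurplus := (hq.surplus_add_piFun_le z Q).trans (hq.monotone_piFun hQ)
  have hprofit := hq.monotone_piFun hz
  nlinarith [mul_le_mul_of_nonneg_left hsurplus hk.1,
    mul_le_mul_of_nonneg_left hprofit (by linarith [hk.2] : (0 : ℝ) ≤ 1 - 2 * k)]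

end IsArgmaxSelection

namespace Assumption1

variable {c q : ℝ → ℝ} {Qbar qbar : ℝ}

theorem cost_qbar_lt (hA1 : Assumption1 c Qbar qbar) : c qbar < qbar := by
  have hdiff : DifferentiableAt ℝ c qbar :=
    (hA1.contDiff2.differentiableOn two_ne_zero).differentiableAt (Ioi_mem_nhds hA1.qbar_pos)
  have hslope := hA1.strictConvex.slope_lt_deriv self_mem_Ici hA1.qbar_pos.le hA1.qbar_pos hdiff
  rwa [hA1.deriv_qbar, slope_def_field, hA1.zero_val, sub_zero, sub_zero,
    div_lt_one hA1.qbar_pos] at hslope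

theorem piFun_one_pos (hA1 : Assumption1 c Qbar qbar) (hq : IsArgmaxSelection c qbar q) :
    0 < piFun c q 1 := by
  have h := (hq 1).2 qbar ⟨hA1.qbar_pos.le, le_rfl⟩
  unfold piFun
  linarith [hA1.cost_qbar_lt]

theorem eq_one_of_piFun_eq (hA1 : Assumption1 c Qbar qbar) (hq : IsArgmaxSelection c qbar q)
    {z : ℝ} (hz : z ≤ 1) (hpi : piFun c q z = piFun c q 1) : z = 1 := by
  by_contra hne
  have hz1 : z < 1 := hz.lt_of_ne hne
  have hqz : q z = 0 := by
    have h := hq.mul_sub_le_piFun z 1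
    unfold piFun at hpi h
    nlinarith [hq.nonneg z]
  have hpi0 : piFun c q z = 0 := by simp [piFun, hqz, hA1.zero_val]
  linarith [hA1.piFun_one_pos hq]

theorem eq_one_or_eq_one_of_weighted_surplus_eq (hA1 : Assumption1 c Qbar qbar)
    (hq : IsArgmaxSelection c qbar q) {k z Q : ℝ} (hk : k ∈ Icc (0 : ℝ) (1 / 2))
    (hz : z ≤ 1) (hQ : Q ≤ 1)
    (heq : k * ((Q - z) * q z) + (1 - k) * piFun c q z = (1 - k) * piFun c q 1) :
    z = 1 ∨ Q = 1 := by
  have hsurplus := hq.surplus_add_piFun_le z Q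
  have hQ1 := hq.monotone_piFun hQ
  have hz1 := hq.monotone_piFun hz
  rcases hk.2.lt_or_eq with hk2 | rfl
  · -- the profit term carries the positive weight `1 - 2k`
    left
    refine hA1.eq_one_of_piFun_eq hq hz (le_antisymm hz1 ?_)
    nlinarith [mul_le_mul_of_nonneg_left (hsurplus.trans hQ1) hk.1]
  · right
    exact hA1.eq_one_of_piFun_eq hq hQ (le_antisymm hQ1 (by linarith))

end Assumption1

theorem Qfun_of_lt {φ : ℝ → ℝ} {u : ℝ} (hu : u < 1) :
    Qfun φ u = (∫ t in u..1, φ t) / (1 - u) := by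
  simp [Qfun, hu]

namespace MemPhi

variable {φ : ℝ → ℝ}

theorem mem_Icc (hφ : MemPhi φ) {u : ℝ} (hu : u ∈ Icc (0 : ℝ) 1) : φ u ∈ Icc (0 : ℝ) 1 :=
  hφ.1 u hu

theorem intervalIntegrable_comp {g : ℝ → ℝ} (hφ : MemPhi φ) (hg : Monotone g) :
    IntervalIntegrable (fun u => g (φ u)) volume 0 1 :=
  MonotoneOn.intervalIntegrable <| by
    rw [uIcc_of_le zero_le_one]
    exact fun a ha b hb hab => hg (hφ.2.1 ha hb hab)

theorem Qfun_mem_Icc (hφ : MemPhi φ) {u : ℝ} (hu : u ∈ Ico (0 : ℝ) 1) :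
    Qfun φ u ∈ Icc (0 : ℝ) 1 := by
  have h1u : 0 < 1 - u := sub_pos.2 hu.2
  have hmem : ∀ t ∈ Icc u 1, φ t ∈ Icc (0 : ℝ) 1 := fun t ht => hφ.mem_Icc ⟨hu.1.trans ht.1, ht.2⟩
  have hnonneg : 0 ≤ ∫ t in u..1, φ t :=
    intervalIntegral.integral_nonneg hu.2.le fun t ht => (hmem t ht).1
  have hle : ∫ t in u..1, φ t ≤ 1 - u := by
    have h := intervalIntegral.norm_integral_le_of_norm_le_const (C := 1) (f := φ) (a := u) (b := 1)
      fun t ht => by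
        rw [uIoc_of_le hu.2.le] at ht
        have := hmem t (Ioc_subset_Icc_self ht)
        rw [Real.norm_eq_abs, abs_le]; constructor <;> linarith [this.1, this.2]
    rw [Real.norm_eq_abs, abs_of_nonneg hnonneg, abs_of_pos h1u, one_mul] at h
    exact h
  rw [Qfun_of_lt hu.2]
  exact ⟨div_nonneg hnonneg h1u.le, (div_le_one h1u).2 hle⟩

theorem continuousOn_Qfun (hφ : MemPhi φ) : ContinuousOn (Qfun φ) (Ioo 0 1) := by
  have hint : ContinuousOn (fun u => ∫ t in u..1, φ t) (Icc 0 1) := by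
    have h := intervalIntegral.continuousOn_primitive_interval_left (a := 0) (b := 1)
      (hφ.2.1.integrableOn_isCompact (μ := volume) isCompact_Icc
        |>.mono_set (uIcc_of_le zero_le_one).subset)
    rwa [uIcc_of_le zero_le_one] at h
  refine ((hint.mono Ioo_subset_Icc_self).div (continuousOn_const.sub continuousOn_id)
    fun u hu => (sub_pos.2 hu.2).ne').congr fun u hu => Qfun_of_lt hu.2

theorem intervalIntegrable_surplus {c q : ℝ → ℝ} {qbar : ℝ} (hφ : MemPhi φ)
    (hq : IsArgmaxSelection c qbar q) :
    IntervalIntegrable (fun u => (Qfun φ u - φ u) * q (φ u)) volume 0 1 := by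
  rw [intervalIntegrable_iff_integrableOn_Ioo_of_le zero_le_one]
  have hqφ : IntegrableOn (fun u => q (φ u)) (Ioo 0 1) :=
    ((intervalIntegrable_iff_integrableOn_Ioo_of_le zero_le_one).1
      (hφ.intervalIntegrable_comp hq.monotone))
  have hφi : IntegrableOn φ (Ioo 0 1) :=
    (intervalIntegrable_iff_integrableOn_Ioo_of_le zero_le_one).1
      (hφ.intervalIntegrable_comp monotone_id)
  refine hqφ.bdd_mul (c := 1) ?_ ?_
  · exact (hφ.continuousOn_Qfun.aestronglyMeasurable measurableSet_Ioo).sub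
      hφi.aestronglyMeasurable
  · filter_upwards [ae_restrict_mem measurableSet_Ioo] with u hu
    have hQ := hφ.Qfun_mem_Icc ⟨hu.1.le, hu.2⟩
    have hz := hφ.mem_Icc ⟨hu.1.le, hu.2.le⟩
    rw [Real.norm_eq_abs, abs_le]
    constructor <;> linarith [hQ.1, hQ.2, hz.1, hz.2]

theorem eq_one_of_forall_Ioo (hφ : MemPhi φ) (h : ∀ u ∈ Ioo (0 : ℝ) 1, φ u = 1) :
    ∀ u ∈ Icc (0 : ℝ) 1, φ u = 1 := by
  intro u hu
  rcases hu.1.eq_or_lt with rfl | hu0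
  · have hcl : (0 : ℝ) ∈ closure (Ioo 0 1) := by
      rw [closure_Ioo zero_ne_one]; exact left_mem_Icc.2 zero_le_one
    simpa using ((hφ.2.2 0 (left_mem_Ico.2 one_pos)).mono fun x hx => hx.1.le).mem_closure hcl
      (t := {1}) fun x hx => h x hx
  rcases hu.2.eq_or_lt with rfl | hu1
  · have hhalf := hφ.2.1 (by norm_num : (1 / 2 : ℝ) ∈ Icc 0 1) hu (by norm_num)
    linarith [h (1 / 2) (by norm_num), (hφ.mem_Icc hu).2]
  · exact h u ⟨hu0, hu1⟩

theorem eq_one_of_ae (hφ : MemPhi φ)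
    (h : ∀ᵐ u ∂volume.restrict (Ioo 0 1), φ u = 1 ∨ Qfun φ u = 1) :
    ∀ u ∈ Icc (0 : ℝ) 1, φ u = 1 := by
  refine hφ.eq_one_of_forall_Ioo fun u hu => ?_
  have : (ae (volume.restrict (Ioo (0 : ℝ) u))).NeBot :=
    ae_restrict_neBot.2 (by simp [hu.1])
  obtain ⟨w, hw, hwIoo⟩ := ((ae_restrict_of_ae_restrict_of_subset
    (Ioo_subset_Ioo_right hu.2.le) h).and (ae_restrict_mem measurableSet_Ioo)).exists
  have hwu : w ∈ Icc (0 : ℝ) 1 := ⟨hwIoo.1.le, (hwIoo.2.trans hu.2).le⟩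
  have huIcc : u ∈ Icc (0 : ℝ) 1 := ⟨hu.1.le, hu.2.le⟩
  rcases hw with hw | hw
  · exact le_antisymm (hφ.mem_Icc huIcc).2 (hw ▸ hφ.2.1 hwu huIcc hwIoo.2.le)
  · have hw1 : 0 < 1 - w := sub_pos.2 (hwIoo.2.trans hu.2)
    rw [Qfun_of_lt (hwIoo.2.trans hu.2), div_eq_one_iff_eq hw1.ne'] at hw
    exact (hφ.2.1.mono (Icc_subset_Icc hwu.1 le_rfl)).eq_of_le_of_integral_eq
      (fun t ht => (hφ.mem_Icc ⟨hwu.1.trans ht.1, ht.2⟩).2) (by rw [hw, mul_one])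
      ⟨hwIoo.2, hu.2.le⟩

end MemPhi

theorem Jfun_eq_integral {c q : ℝ → ℝ} {qbar k : ℝ} {φ : ℝ → ℝ} (hφ : MemPhi φ)
    (hq : IsArgmaxSelection c qbar q) :
    Jfun c q k φ
      = ∫ u in (0 : ℝ)..1, (k * ((Qfun φ u - φ u) * q (φ u)) + (1 - k) * piFun c q (φ u)) := by
  rw [intervalIntegral.integral_add ((hφ.intervalIntegrable_surplus hq).const_mul k)
    ((hφ.intervalIntegrable_comp hq.monotone_piFun).const_mul (1 - k)),
    intervalIntegral.integral_const_mul, intervalIntegral.integral_const_mul]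
  rfl

theorem Jfun_of_eq_one {c q : ℝ → ℝ} {k : ℝ} {φ : ℝ → ℝ}
    (hφ : ∀ u ∈ Icc (0 : ℝ) 1, φ u = 1) : Jfun c q k φ = (1 - k) * piFun c q 1 := by
  have hQ : ∀ u ∈ Ioo (0 : ℝ) 1, Qfun φ u = 1 := fun u hu => by
    have hint : ∫ t in u..1, φ t = 1 - u := by
      rw [intervalIntegral.integral_congr (g := fun _ => (1 : ℝ)) fun t ht => by
        rw [uIcc_of_le hu.2.le] at ht; exact hφ t ⟨hu.1.le.trans ht.1, ht.2⟩]
      simp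
    rw [Qfun_of_lt hu.2, hint, div_self (sub_pos.2 hu.2).ne']
  have hCS : CS q φ = 0 := by
    rw [CS, intervalIntegral.integral_congr_Ioo_of_le zero_le_one (g := fun _ => 0)
      fun u hu => by simp [hQ u hu, hφ u (Ioo_subset_Icc_self hu)]]
    simp
  have hProfit : Profit c q φ = piFun c q 1 := by
    rw [Profit, intervalIntegral.integral_congr_Ioo_of_le zero_le_one (g := fun _ => piFun c q 1)
      fun u hu => by simp [hφ u (Ioo_subset_Icc_self hu)]]
    simp
  rw [Jfun, hCS, hProfit, mul_zero, zero_add]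

/-- For `k ∈ [0,1/2]`, every `φ ∈ Φ` satisfies `J_k(φ) ≤ (1−k)·π(1)`,
with equality iff `φ ≡ 1` on `[0,1]`; i.e. the constant-one profile is the unique
maximizer of `J_k` on `Φ`. -/
theorem profit_biased_top_type_optimal
    (c : ℝ → ℝ) (Qbar qbar : ℝ) (q : ℝ → ℝ)
    (hA1 : Assumption1 c Qbar qbar)
    (hq : IsArgmaxSelection c qbar q)
    (k : ℝ) (hk : k ∈ Set.Icc (0:ℝ) (1/2)) :
    ∀ φ : ℝ → ℝ, MemPhi φ →
      Jfun c q k φ ≤ (1 - k) * piFun c q 1 ∧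
      (Jfun c q k φ = (1 - k) * piFun c q 1 ↔ ∀ u ∈ Set.Icc (0:ℝ) 1, φ u = 1) := by
  intro φ hφ
  have hbounds : ∀ u ∈ Ioo (0 : ℝ) 1, φ u ≤ 1 ∧ Qfun φ u ≤ 1 := fun u hu =>
    ⟨(hφ.mem_Icc (Ioo_subset_Icc_self hu)).2, (hφ.Qfun_mem_Icc (Ioo_subset_Ico_self hu)).2⟩
  have hdensity_le : ∀ u ∈ Ioo (0 : ℝ) 1, k * ((Qfun φ u - φ u) * q (φ u))
      + (1 - k) * piFun c q (φ u) ≤ (1 - k) * piFun c q 1 := fun u hu =>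
    hq.weighted_surplus_le hk (hbounds u hu).1 (hbounds u hu).2
  have hdensity_int := ((hφ.intervalIntegrable_surplus hq).const_mul k).add
    ((hφ.intervalIntegrable_comp hq.monotone_piFun).const_mul (1 - k))
  have hle : Jfun c q k φ ≤ (1 - k) * piFun c q 1 := by
    simpa [Jfun_eq_integral hφ hq] using intervalIntegral.integral_mono_on_of_le_Ioo
      zero_le_one hdensity_int intervalIntegrable_const hdensity_le
  refine ⟨hle, fun heq => hφ.eq_one_of_ae ?_, Jfun_of_eq_one⟩
  have hae := ae_restrict_Ioo_eq_of_le_of_integral_eq zero_le_one hdensity_int hdensity_le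
    (by rw [← Jfun_eq_integral hφ hq, heq, sub_zero, one_mul])
  filter_upwards [hae, ae_restrict_mem measurableSet_Ioo] with u hu hmem
  exact hA1.eq_one_or_eq_one_of_weighted_surplus_eq hq hk (hbounds u hmem).1 (hbounds u hmem).2 hu

end Screening
end

section
/- Fix k ∈ (1/2,1]. Then the constant-one profile φ ≡ 1 does not maximize J_k over Φ: there exists ψ ∈ Φ with J_k(ψ) > J_k(1). (In fact, for a ∈ (0,1) and ε ∈ (0,1) sufficiently small, the profile equal to 1−ε on [0,a) and 1 on [a,1] yields a strictly higher value of J_k.) -/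
open MeasureTheory Set Filter

namespace Screening

/-
Lowering the profile from 1 to 1 - ε on [0, a) costs at most a·ε·q̄ of profit, because π has
subgradient q, and creates consumer surplus at least a·ε·(1 - a)·q(1 - ε), because there
Q - φ = ε(1 - a)/(1 - u). With 1 - a = 1/(2k) the weighted gain beats the weighted loss as soon as
q(1 - ε) > 2(1 - k)·q̄, and 2(1 - k) < 1 for k > 1/2. Such an ε exists: c'(q̄) = 1 and strict
convexity make the chord slope of c on [y, q̄] smaller than 1 for every y < q̄, so for prices
above that slope the seller's optimal quantity exceeds y.
-/

theorem integral_eq_add_of_eqOn_Ioo {f g h : ℝ → ℝ} {a b c : ℝ} (hab : a ≤ b) (hbc : b ≤ c)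
    (hg : IntervalIntegrable g volume a b) (hh : IntervalIntegrable h volume b c)
    (hfg : EqOn f g (Ioo a b)) (hfh : EqOn f h (Ioo b c)) :
    ∫ x in a..c, f x = (∫ x in a..b, g x) + ∫ x in b..c, h x := by
  have hf₁ : IntervalIntegrable f volume a b :=
    hg.congr_uIoo (by rw [uIoo_of_le hab]; exact hfg.symm)
  have hf₂ : IntervalIntegrable f volume b c :=
    hh.congr_uIoo (by rw [uIoo_of_le hbc]; exact hfh.symm)
  rw [← intervalIntegral.integral_add_adjacent_intervals hf₁ hf₂,
    intervalIntegral.integral_congr_Ioo_of_le hab hfg,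
    intervalIntegral.integral_congr_Ioo_of_le hbc hfh]

theorem Qfun_eq_of_eqOn_Ici {φ : ℝ → ℝ} {r u : ℝ} (hu : u < 1) (h : EqOn φ (fun _ => r) (Ici u)) :
    Qfun φ u = r := by
  have h1u : 1 - u ≠ 0 := sub_ne_zero.2 hu.ne'
  have hIcc : EqOn φ (fun _ => r) (uIcc u 1) :=
    h.mono (by rw [uIcc_of_le hu.le]; exact Icc_subset_Ici_self)
  rw [Qfun, if_pos hu, intervalIntegral.integral_congr hIcc, intervalIntegral.integral_const,
    smul_eq_mul, mul_div_cancel_left₀ _ h1u]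

theorem CS_const_one (q : ℝ → ℝ) : CS q (fun _ => 1) = 0 := by
  rw [CS, intervalIntegral.integral_congr_Ioo_of_le zero_le_one (g := fun _ => 0),
    intervalIntegral.integral_zero]
  intro u hu
  simp only [Qfun_eq_of_eqOn_Ici hu.2 (fun _ _ => rfl), sub_self, zero_mul]

theorem Profit_const (c q : ℝ → ℝ) (r : ℝ) : Profit c q (fun _ => r) = piFun c q r := by
  simp [Profit]

section Argmax

variable {c q : ℝ → ℝ} {qbar : ℝ}

theorem piFun_add_mul_le (hq : IsArgmaxSelection c qbar q) (z z' : ℝ) :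
    piFun c q z + (z' - z) * q z ≤ piFun c q z' := by
  have := (hq z').2 (q z) (hq z).1
  unfold piFun
  linarith

theorem le_slope_of_argmax_le (hq : IsArgmaxSelection c qbar q) (hc : ConvexOn ℝ (Ici 0) c)
    {y z : ℝ} (hzy : q z ≤ y) (hy : y < qbar) : z ≤ slope c y qbar := by
  obtain ⟨⟨hqz₀, hqz₁⟩, hopt⟩ := hq z
  have hqz : q z < qbar := hzy.trans_lt hy
  have hslope : slope c (q z) qbar ≤ slope c y qbar := by
    rw [slope_comm c (q z), slope_comm c y]
    exact hc.slope_mono (mem_Ici.2 (hqz₀.trans hqz₁)) ⟨mem_Ici.2 hqz₀, hqz.ne⟩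
      ⟨mem_Ici.2 (hqz₀.trans hzy), hy.ne⟩ hzy
  have hcorner : z ≤ slope c (q z) qbar := by
    rw [slope_def_field, le_div_iff₀ (sub_pos.2 hqz)]
    linarith [hopt qbar ⟨hqz₀.trans hqz₁, le_rfl⟩]
  exact hcorner.trans hslope

variable {Qbar : ℝ}

theorem slope_lt_one (hA1 : Assumption1 c Qbar qbar) {y : ℝ} (hy₀ : 0 ≤ y) (hy : y < qbar) :
    slope c y qbar < 1 := by
  have hdiff : DifferentiableAt ℝ c qbar :=
    (hA1.contDiff2.differentiableOn (by norm_num)).differentiableAt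
      (isOpen_Ioi.mem_nhds hA1.qbar_pos)
  simpa [hA1.deriv_qbar] using
    hA1.strictConvex.slope_lt_deriv (mem_Ici.2 hy₀) (mem_Ici.2 (hy₀.trans hy.le)) hy hdiff

theorem exists_lt_argmax_one_sub (hA1 : Assumption1 c Qbar qbar) (hq : IsArgmaxSelection c qbar q)
    {y : ℝ} (hy₀ : 0 ≤ y) (hy : y < qbar) : ∃ ε ∈ Ioo (0 : ℝ) 1, y < q (1 - ε) := by
  set s := slope c y qbar
  have hs : s < 1 := slope_lt_one hA1 hy₀ hy
  refine ⟨min ((1 - s) / 2) (1 / 2),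
    ⟨lt_min (by linarith) (by norm_num), (min_le_right _ _).trans_lt (by norm_num)⟩, ?_⟩
  by_contra! h
  have := le_slope_of_argmax_le hq hA1.strictConvex.convexOn h hy
  have := min_le_left ((1 - s) / 2) (1 / 2)
  linarith

end Argmax

noncomputable def stepProfile (a ε u : ℝ) : ℝ := if u < a then 1 - ε else 1

section StepProfile

variable {a ε : ℝ}

theorem stepProfile_of_lt {u : ℝ} (h : u < a) : stepProfile a ε u = 1 - ε := if_pos h

theorem stepProfile_of_le {u : ℝ} (h : a ≤ u) : stepProfile a ε u = 1 := if_neg (not_lt.2 h)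

theorem memPhi_stepProfile (hε : ε ∈ Icc (0 : ℝ) 1) : MemPhi (stepProfile a ε) := by
  refine ⟨fun u _ => ?_, fun x _ y _ hxy => ?_, fun u _ => ?_⟩
  · unfold stepProfile
    split_ifs <;> constructor <;> linarith [hε.1, hε.2]
  · unfold stepProfile
    split_ifs <;> linarith [hε.1]
  · rcases lt_or_ge u a with hua | hau
    · exact (continuousAt_const.congr (eventually_of_mem (isOpen_Iio.mem_nhds hua)
        fun x hx => (stepProfile_of_lt hx).symm)).continuousWithinAt
    · exact continuousWithinAt_const.congr (fun y hy => stepProfile_of_le (hau.trans hy))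
        (stepProfile_of_le hau)

theorem Qfun_stepProfile_sub_of_lt (ha : a < 1) {u : ℝ} (hu : u < a) :
    Qfun (stepProfile a ε) u - stepProfile a ε u = ε * (1 - a) / (1 - u) := by
  have h1u : 1 - u ≠ 0 := sub_ne_zero.2 (hu.trans ha).ne'
  have hint : ∫ t in u..1, stepProfile a ε t = (a - u) * (1 - ε) + (1 - a) := by
    rw [integral_eq_add_of_eqOn_Ioo (g := fun _ => 1 - ε) (h := fun _ => 1) hu.le ha.le
      intervalIntegrable_const intervalIntegrable_const (fun t ht => stepProfile_of_lt ht.2)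
      (fun t ht => stepProfile_of_le ht.1.le)]
    simp only [intervalIntegral.integral_const, smul_eq_mul, mul_one]
  rw [Qfun, if_pos (hu.trans ha), hint, stepProfile_of_lt hu]
  field_simp
  ring

theorem mul_le_CS_stepProfile {q : ℝ → ℝ} (ha : a ∈ Ioo (0 : ℝ) 1) (hε : 0 ≤ ε)
    (hq : 0 ≤ q (1 - ε)) : a * (ε * (1 - a) * q (1 - ε)) ≤ CS q (stepProfile a ε) := by
  have hcont : ContinuousOn (fun u => ε * (1 - a) / (1 - u) * q (1 - ε)) (uIcc 0 a) := by
    refine (continuousOn_const.div (by fun_prop) fun u hu => ?_).mul continuousOn_const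
    rw [uIcc_of_le ha.1.le] at hu
    exact sub_ne_zero.2 (hu.2.trans_lt ha.2).ne'
  rw [CS, integral_eq_add_of_eqOn_Ioo (h := fun _ => 0) ha.1.le ha.2.le hcont.intervalIntegrable
    intervalIntegrable_const, intervalIntegral.integral_zero, add_zero]
  · calc a * (ε * (1 - a) * q (1 - ε))
        = ∫ _ in (0 : ℝ)..a, ε * (1 - a) * q (1 - ε) := by
          rw [intervalIntegral.integral_const, smul_eq_mul, sub_zero]
      _ ≤ _ := intervalIntegral.integral_mono_on ha.1.le intervalIntegrable_const
          hcont.intervalIntegrable fun u hu => ?_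
    have h1u : 0 < 1 - u := by linarith [hu.2, ha.2]
    gcongr
    exact le_div_self (mul_nonneg hε (by linarith [ha.2])) h1u (by linarith [hu.1])
  · intro u hu
    beta_reduce
    rw [Qfun_stepProfile_sub_of_lt ha.2 hu.2, stepProfile_of_lt hu.2]
  · intro u hu
    simp only [Qfun_eq_of_eqOn_Ici hu.2 fun t ht => stepProfile_of_le (hu.1.le.trans ht),
      stepProfile_of_le hu.1.le, sub_self, zero_mul]

theorem Profit_stepProfile {c q : ℝ → ℝ} (ha : a ∈ Icc (0 : ℝ) 1) :
    Profit c q (stepProfile a ε) = a * piFun c q (1 - ε) + (1 - a) * piFun c q 1 := by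
  rw [Profit, integral_eq_add_of_eqOn_Ioo (g := fun _ => piFun c q (1 - ε))
    (h := fun _ => piFun c q 1) ha.1 ha.2 intervalIntegrable_const intervalIntegrable_const
    (fun u hu => by simp only [stepProfile_of_lt hu.2])
    (fun u hu => by simp only [stepProfile_of_le hu.1.le])]
  simp only [intervalIntegral.integral_const, smul_eq_mul, sub_zero]

theorem Jfun_const_one_lt_stepProfile {c q : ℝ → ℝ} {qbar k : ℝ}
    (hq : IsArgmaxSelection c qbar q) (hk : k ∈ Icc (0 : ℝ) 1) (ha : a ∈ Ioo (0 : ℝ) 1)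
    (hε : ε ∈ Ioo (0 : ℝ) 1) (hgain : (1 - k) * qbar < k * (1 - a) * q (1 - ε)) :
    Jfun c q k (fun _ => 1) < Jfun c q k (stepProfile a ε) := by
  have hCS := mul_le_CS_stepProfile ha hε.1.le (hq (1 - ε)).1.1
  have hloss : piFun c q 1 - ε * qbar ≤ piFun c q (1 - ε) := by
    nlinarith [piFun_add_mul_le hq 1 (1 - ε), (hq 1).1.2, hε.1]
  rw [Jfun, Jfun, CS_const_one, Profit_const, Profit_stepProfile ⟨ha.1.le, ha.2.le⟩]
  nlinarith [mul_le_mul_of_nonneg_left hCS hk.1,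
    mul_le_mul_of_nonneg_left hloss (mul_nonneg (sub_nonneg.2 hk.2) ha.1.le),
    mul_lt_mul_of_pos_left hgain (mul_pos ha.1 hε.1)]

end StepProfile

/-- For `k ∈ (1/2,1]`, the constant-one profile does not maximize `J_k`
over `Φ`: some `ψ ∈ Φ` achieves a strictly larger value. -/
theorem const_one_not_optimal
    (c : ℝ → ℝ) (Qbar qbar : ℝ) (q : ℝ → ℝ)
    (hA1 : Assumption1 c Qbar qbar)
    (hq : IsArgmaxSelection c qbar q)
    (k : ℝ) (hk : k ∈ Set.Ioc (1/2 : ℝ) 1) :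
    ∃ ψ : ℝ → ℝ, MemPhi ψ ∧ Jfun c q k (fun _ => 1) < Jfun c q k ψ := by
  obtain ⟨hk₁, hk₂⟩ := hk
  have hk₀ : 0 < k := by linarith
  have hqbar := hA1.qbar_pos
  obtain ⟨ε, hε, hqε⟩ := exists_lt_argmax_one_sub hA1 hq (y := 2 * (1 - k) * qbar)
    (by nlinarith) (by nlinarith)
  set a := 1 - 1 / (2 * k)
  have ha : a ∈ Ioo (0 : ℝ) 1 :=
    ⟨by rw [sub_pos, div_lt_one (by linarith)]; linarith, sub_lt_self _ (by positivity)⟩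
  have hka : k * (1 - a) = 1 / 2 := by
    simp only [a]
    field_simp
    ring
  refine ⟨stepProfile a ε, memPhi_stepProfile ⟨hε.1.le, hε.2.le⟩,
    Jfun_const_one_lt_stepProfile hq ⟨hk₀.le, hk₂⟩ ha hε ?_⟩
  rw [hka]
  linarith

end Screening
end

section
/- Let c satisfy Assumption 1 and suppose in addition that c is thrice continuously differentiable on (0,∞) with −q·c'''(q)/c''(q) < 2 for all q ∈ (0,q̄]. Then lim_{q↓0} q·c''(q) = 0. -/
open MeasureTheory Set Filter

namespace Screening

open Topology

/-!
The curvature bound `-q c'''(q) / c''(q) < 2` says exactly that `t ↦ t² c''(t)` is increasing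
on `(0, q̄]`. Hence `c''` drops by at most a factor `4` across `[x, 2x]`, and the mean value
theorem gives `x c''(x) ≤ 4 (c'(2x) - c'(x))`. As `c'` is monotone and nonnegative near `0`,
it has a limit at `0⁺`, so the right-hand side tends to `0`.
-/

lemma monotoneOn_sq_mul_of_neg_mul_deriv_div_lt_two {f : ℝ → ℝ} {a : ℝ}
    (hf : ContinuousOn f (Ioc 0 a)) (hdf : ∀ x ∈ Ioo 0 a, DifferentiableAt ℝ f x)
    (hpos : ∀ x ∈ Ioo 0 a, 0 < f x) (hcurv : ∀ x ∈ Ioo 0 a, -x * deriv f x / f x < 2) :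
    MonotoneOn (fun x => x ^ 2 * f x) (Ioc 0 a) := by
  have hderiv : ∀ x ∈ Ioo 0 a,
      HasDerivAt (fun x => x ^ 2 * f x) (x * (2 * f x + x * deriv f x)) x := by
    intro x hx
    exact ((hasDerivAt_pow 2 x).fun_mul (hdf x hx).hasDerivAt).congr_deriv (by push_cast; ring)
  refine monotoneOn_of_deriv_nonneg (convex_Ioc 0 a)
    ((continuousOn_id.pow 2).mul hf) (fun x hx => ?_) (fun x hx => ?_) <;>
    rw [interior_Ioc] at hx
  · exact (hderiv x hx).differentiableAt.differentiableWithinAt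
  · rw [(hderiv x hx).deriv]
    have := (div_lt_iff₀ (hpos x hx)).mp (hcurv x hx)
    exact mul_nonneg hx.1.le (by linarith)

lemma mul_le_four_mul_sub_of_sq_mul_le {F f : ℝ → ℝ} {x : ℝ} (hx : 0 < x)
    (hF : ContinuousOn F (Icc x (2 * x))) (hF' : ∀ t ∈ Ioo x (2 * x), HasDerivAt F (f t) t)
    (hf_nonneg : ∀ t ∈ Ioo x (2 * x), 0 ≤ f t)
    (hf : ∀ t ∈ Ioo x (2 * x), x ^ 2 * f x ≤ t ^ 2 * f t) :
    x * f x ≤ 4 * (F (2 * x) - F x) := by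
  obtain ⟨t, ht, hslope⟩ := exists_hasDerivAt_eq_slope F f (by linarith) hF hF'
  rw [show 2 * x - x = x by ring, eq_div_iff hx.ne'] at hslope
  have ht2 : t ^ 2 ≤ (2 * x) ^ 2 := pow_le_pow_left₀ (hx.trans ht.1).le ht.2.le 2
  have hft : x * (x * f x) ≤ x * (4 * x * f t) := by
    nlinarith [hf t ht, mul_le_mul_of_nonneg_right ht2 (hf_nonneg t ht)]
  rw [← hslope]
  linarith [le_of_mul_le_mul_left hft hx]

lemma tendsto_comp_two_mul_sub_nhdsGT_zero {F : ℝ → ℝ} {L : ℝ}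
    (hF : Tendsto F (𝓝[>] 0) (𝓝 L)) :
    Tendsto (fun x => F (2 * x) - F x) (𝓝[>] 0) (𝓝 0) := by
  have hdouble : Tendsto (2 * ·) (𝓝[>] (0 : ℝ)) (𝓝[>] 0) := by
    nth_rw 1 [← comap_mulLeft_nhdsGT_zero two_pos]
    exact tendsto_comap
  simpa using (hF.comp hdouble).sub hF

lemma exists_tendsto_deriv_nhdsGT_zero {c : ℝ → ℝ} (hmono : MonotoneOn c (Ioi 0))
    (hconv : ConvexOn ℝ (Ioi 0) c) (hdiff : ∀ x ∈ Ioi 0, DifferentiableAt ℝ c x) :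
    ∃ L, Tendsto (deriv c) (𝓝[>] 0) (𝓝 L) := by
  refine ⟨_, (hconv.monotoneOn_deriv hdiff).tendsto_nhdsGT ⟨0, ?_⟩⟩
  rintro _ ⟨x, hx, rfl⟩
  rw [← derivWithin_of_isOpen isOpen_Ioi hx]
  exact hmono.derivWithin_nonneg

/-- Under Assumption 1 together with the curvature condition
(`c` thrice continuously differentiable on `(0,∞)` and `−q·c'''(q)/c''(q) < 2` on
`(0,q̄]`), one has `q·c''(q) → 0` as `q ↓ 0`. -/
theorem q_mul_second_deriv_tendsto_zero
    (c : ℝ → ℝ) (Qbar qbar : ℝ)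
    (hA1 : Assumption1 c Qbar qbar)
    (h3 : ContDiffOn ℝ 3 c (Set.Ioi 0))
    (hcurv : ∀ x ∈ Set.Ioc (0:ℝ) qbar,
      -x * deriv (deriv (deriv c)) x / deriv (deriv c) x < 2) :
    Tendsto (fun x => x * deriv (deriv c) x) (nhdsWithin 0 (Set.Ioi 0)) (nhds 0) := by
  have hc' : ContDiffOn ℝ 2 (deriv c) (Ioi 0) := h3.deriv_of_isOpen isOpen_Ioi (by norm_num)
  have hc'' : ContDiffOn ℝ 1 (deriv (deriv c)) (Ioi 0) :=
    hc'.deriv_of_isOpen isOpen_Ioi (by norm_num)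
  have hpos : ∀ x ∈ Ioc 0 qbar, 0 < deriv (deriv c) x := fun x hx =>
    hA1.second_deriv_pos x ⟨hx.1, hx.2.trans hA1.qbar_lt_Qbar.le⟩
  have hsq : MonotoneOn (fun x => x ^ 2 * deriv (deriv c) x) (Ioc 0 qbar) :=
    monotoneOn_sq_mul_of_neg_mul_deriv_div_lt_two (hc''.continuousOn.mono Ioc_subset_Ioi_self)
      (fun x hx => (hc''.differentiableOn one_ne_zero).differentiableAt (Ioi_mem_nhds hx.1))
      (fun x hx => hpos x (Ioo_subset_Ioc_self hx)) (fun x hx => hcurv x (Ioo_subset_Ioc_self hx))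
  have hbound : ∀ x ∈ Ioo 0 (qbar / 2),
      x * deriv (deriv c) x ≤ 4 * (deriv c (2 * x) - deriv c x) := by
    rintro x ⟨hx, hxq⟩
    have hmem : ∀ t ∈ Icc x (2 * x), t ∈ Ioc 0 qbar := fun t ht =>
      ⟨hx.trans_le ht.1, by linarith [ht.2]⟩
    have hmem' : ∀ t ∈ Ioo x (2 * x), t ∈ Ioc 0 qbar := fun t ht =>
      hmem t (Ioo_subset_Icc_self ht)
    exact mul_le_four_mul_sub_of_sq_mul_le hx (hc'.continuousOn.mono fun t ht => (hmem t ht).1)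
      (fun t ht => ((hc'.differentiableOn two_ne_zero).differentiableAt
        (Ioi_mem_nhds (hmem' t ht).1)).hasDerivAt)
      (fun t ht => (hpos t (hmem' t ht)).le)
      (fun t ht => hsq (hmem x (left_mem_Icc.2 (by linarith))) (hmem' t ht) ht.1.le)
  obtain ⟨L, hL⟩ := exists_tendsto_deriv_nhdsGT_zero
    (hA1.strictMono.monotoneOn.mono Ioi_subset_Ici_self)
    (hA1.strictConvex.convexOn.subset Ioi_subset_Ici_self (convex_Ioi 0))
    (fun x hx => (h3.differentiableOn (by norm_num)).differentiableAt (Ioi_mem_nhds hx))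
  have hupper := (tendsto_comp_two_mul_sub_nhdsGT_zero hL).const_mul 4
  rw [mul_zero] at hupper
  have hnear : Ioo 0 (qbar / 2) ∈ 𝓝[>] (0 : ℝ) := Ioo_mem_nhdsGT (half_pos hA1.qbar_pos)
  refine tendsto_of_tendsto_of_tendsto_of_le_of_le' tendsto_const_nhds hupper ?_ ?_ <;>
    filter_upwards [hnear] with x hx
  · exact (mul_pos hx.1 (hpos x ⟨hx.1, by linarith [hx.2, hA1.qbar_pos]⟩)).le
  · exact hbound x hx

end Screening
end

section
/- Fix λ ∈ (0,1]. Let c satisfy Assumptions 1 and 2, let I ⊆ (0,q̄] be an interval, and let A ≥ 0 satisfy A ≤ λ·z for all z ∈ I. Then the map z ↦ H(A,z) := c'(z) + c''(z)·(λ·z − A) is strictly increasing on I; in particular its derivative (1+λ)·c''(z) + (λ·z − A)·c'''(z) is strictly positive for all z ∈ I. -/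
open MeasureTheory Set Filter

namespace Screening

lemma one_add_mul_add_mul_pos_of_neg_mul_div_lt_two {d₂ d₃ z lam B : ℝ} (hd₂ : 0 < d₂)
    (hcurv : -z * d₃ / d₂ < 2) (hlam : lam ∈ Set.Ioc (0:ℝ) 1) (hB₀ : 0 ≤ B)
    (hB : B ≤ lam * z) :
    0 < (1 + lam) * d₂ + B * d₃ := by
  have hcurv' : -z * d₃ < 2 * d₂ := (div_lt_iff₀ hd₂).mp hcurv
  obtain ⟨hlam₀, hlam₁⟩ := hlam
  rcases le_or_gt 0 d₃ with hd₃ | hd₃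
  · nlinarith [mul_nonneg hB₀ hd₃]
  · -- `B d₃ ≥ λ z d₃ > -2λ d₂`, so the sum exceeds `(1 - λ) d₂ ≥ 0`
    have hBd₃ : lam * z * d₃ ≤ B * d₃ := mul_le_mul_of_nonpos_right hB hd₃.le
    have hlam_curv : lam * (-z * d₃) < lam * (2 * d₂) := mul_lt_mul_of_pos_left hcurv' hlam₀
    nlinarith

lemma hasDerivAt_deriv_add_deriv_deriv_mul {f : ℝ → ℝ} {s : Set ℝ} (hf : ContDiffOn ℝ 3 f s)
    (hs : IsOpen s) {x : ℝ} (hx : x ∈ s) (a b : ℝ) :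
    HasDerivAt (fun z => deriv f z + deriv (deriv f) z * (a * z - b))
      ((1 + a) * deriv (deriv f) x + (a * x - b) * deriv (deriv (deriv f)) x) x := by
  have hf' : ContDiffOn ℝ 2 (deriv f) s := hf.deriv_of_isOpen hs (by norm_num)
  have hf'' : ContDiffOn ℝ 1 (deriv (deriv f)) s := hf'.deriv_of_isOpen hs (by norm_num)
  have H₁ : HasDerivAt (deriv f) (deriv (deriv f) x) x :=
    ((hf'.contDiffAt (hs.mem_nhds hx)).differentiableAt (by norm_num)).hasDerivAt
  have H₂ : HasDerivAt (deriv (deriv f)) (deriv (deriv (deriv f)) x) x :=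
    ((hf''.contDiffAt (hs.mem_nhds hx)).differentiableAt (by norm_num)).hasDerivAt
  have Hlin : HasDerivAt (fun z => a * z - b) a x := by
    simpa using ((hasDerivAt_id x).const_mul a).sub_const b
  exact (H₁.add (H₂.mul Hlin)).congr_deriv (by ring)

/-- Under Assumptions 1 and 2, for `λ ∈ (0,1]`, an interval
`I ⊆ (0,q̄]`, and `A ≥ 0` with `A ≤ λ·z` for all `z ∈ I`, the map
`z ↦ H(A,z) = c'(z) + c''(z)(λz − A)` is strictly increasing on `I`; in particular
its derivative `(1+λ)c''(z) + (λz − A)c'''(z)` is strictly positive on `I`. -/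
theorem H_strictMono_on_interval
    (c : ℝ → ℝ) (Qbar qbar : ℝ)
    (hA1 : Assumption1 c Qbar qbar)
    (hA2 : Assumption2 c qbar)
    (lam : ℝ) (hlam : lam ∈ Set.Ioc (0:ℝ) 1)
    (I : Set ℝ) (hI : I ⊆ Set.Ioc 0 qbar) (hIintv : I.OrdConnected)
    (A : ℝ) (hA : 0 ≤ A) (hAz : ∀ z ∈ I, A ≤ lam * z) :
    StrictMonoOn (fun z => deriv c z + deriv (deriv c) z * (lam * z - A)) I ∧
    ∀ z ∈ I, 0 < (1 + lam) * deriv (deriv c) z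
        + (lam * z - A) * deriv (deriv (deriv c)) z := by
  have hpos : ∀ z ∈ I, 0 < (1 + lam) * deriv (deriv c) z
      + (lam * z - A) * deriv (deriv (deriv c)) z := by
    intro z hz
    obtain ⟨hz₀, hzq⟩ := hI hz
    exact one_add_mul_add_mul_pos_of_neg_mul_div_lt_two
      (hA1.second_deriv_pos z ⟨hz₀, hzq.trans hA1.qbar_lt_Qbar.le⟩)
      (hA2.curvature z ⟨hz₀, hzq⟩) hlam (sub_nonneg.2 (hAz z hz)) (by linarith)
  have hderiv : ∀ z ∈ I, HasDerivAt (fun z => deriv c z + deriv (deriv c) z * (lam * z - A))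
      ((1 + lam) * deriv (deriv c) z + (lam * z - A) * deriv (deriv (deriv c)) z) z :=
    fun z hz => hasDerivAt_deriv_add_deriv_deriv_mul hA2.contDiff3 isOpen_Ioi (hI hz).1 lam A
  refine ⟨strictMonoOn_of_hasDerivWithinAt_pos hIintv.convex
    (fun z hz => (hderiv z hz).continuousAt.continuousWithinAt)
    (fun z hz => (hderiv z (interior_subset hz)).hasDerivWithinAt)
    (fun z hz => hpos z (interior_subset hz)), hpos⟩

end Screening
end
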